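/- If E is not a parent of Y, MI is nonempty, and m satisfies m_min ≤ m ≤ d, then S_ICP ⊆ S_AS^m, with equality if and only if S_ICP is invariant. -/
import Mathlib


/-- Nodes of the graph: the environment node `E`, predictor nodes `V j` for
`j ∈ {1, …, d}` (represented by `Fin d`), and the response node `Y`. -/
inductive Node (d : ℕ) : Type where
  | E : Node d
  | V : Fin d → Node d
  | Y : Node d
deriving DecidableEq

/-- A directed acyclic graph on `{E} ∪ {1, …, d} ∪ {Y}` in which `E` has no
parents (`E` is exogenous). -/
structure CGraph (d : ℕ) where
  adj : Node d → Node d → Prop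
  acyclic : ∀ v, ¬ Relation.TransGen adj v v
  exogenous : ∀ v, ¬ adj v Node.E

namespace CGraph

variable {d : ℕ} (G : CGraph d)

/-- Undirected adjacency: an edge between `u` and `v` in either direction. -/
def Edge (u v : Node d) : Prop := G.adj u v ∨ G.adj v u

/-- `p` is a path between `a` and `b`: a duplicate-free list of nodes starting
at `a`, ending at `b`, with consecutive nodes adjacent (in either direction). -/
def IsPath (p : List (Node d)) (a b : Node d) : Prop :=
  p.head? = some a ∧ p.getLast? = some b ∧ p.Nodup ∧ p.Chain' G.Edge

/-- `x` is a (strict) descendant of `v`. -/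
def Desc (v x : Node d) : Prop := Relation.TransGen G.adj v x

/-- The consecutive triple `u, m, w` on a path blocks the path given `C`:
either `m` is a non-collider lying in `C`, or `m` is a collider such that
neither `m` nor any of its descendants lies in `C`. -/
def BlockedAt (C : Set (Node d)) (u m w : Node d) : Prop :=
  (¬ (G.adj u m ∧ G.adj w m) ∧ m ∈ C) ∨
  ((G.adj u m ∧ G.adj w m) ∧ m ∉ C ∧ ∀ x, G.Desc m x → x ∉ C)

/-- A path `p` is blocked by `C` if some consecutive triple on it blocks it. -/
def Blocked (C : Set (Node d)) (p : List (Node d)) : Prop :=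
  ∃ q u m w r, p = q ++ u :: m :: w :: r ∧ G.BlockedAt C u m w

/-- `a` and `b` are d-separated given `C`: every path between them is blocked. -/
def DSep (a b : Node d) (C : Set (Node d)) : Prop :=
  ∀ p, G.IsPath p a b → G.Blocked C p

/-- `S ⊆ {1, …, d}` is invariant if `E` and `Y` are d-separated given `S`. -/
def Invariant (S : Set (Fin d)) : Prop := G.DSep Node.E Node.Y (Node.V '' S)

/-- `S` is minimally invariant if it is invariant and no strict subset of `S`
is invariant. -/
def MinInvariant (S : Set (Fin d)) : Prop :=
  G.Invariant S ∧ ∀ S', S' ⊂ S → ¬ G.Invariant S'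

/-- `S_AS`: the union of all minimally invariant sets. -/
def SAS : Set (Fin d) := ⋃₀ {S | G.MinInvariant S}

/-- `S_ICP`: the intersection of all invariant sets (`∅` if there are none). -/
def SICP : Set (Fin d) :=
  {j | (∃ S, G.Invariant S) ∧ ∀ S, G.Invariant S → j ∈ S}

/-- `S_AS^m`: the union of all minimally invariant sets of cardinality `≤ m`. -/
def SASm (m : ℕ) : Set (Fin d) := ⋃₀ {S | G.MinInvariant S ∧ S.ncard ≤ m}

/-- The parents of `Y` among `{1, …, d}`. -/
def paY : Set (Fin d) := {j | G.adj (Node.V j) Node.Y}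

/-- The children of `E` among `{1, …, d}`. -/
def chE : Set (Fin d) := {j | G.adj Node.E (Node.V j)}

/-- The ancestors of `Y` among `{1, …, d}`. -/
def anY : Set (Fin d) := {j | Relation.TransGen G.adj (Node.V j) Node.Y}

/-- `PA(A)`: the union of the parent sets of the elements of `A ⊆ {1, …, d}`. -/
def paOf (A : Set (Fin d)) : Set (Fin d) := {j | ∃ i ∈ A, G.adj (Node.V j) (Node.V i)}

end CGraph

/-- if `E` is not a parent of `Y`, `MI` is nonempty and
`m_min ≤ m ≤ d`, then `S_ICP ⊆ S_AS^m`, with equality if and only if `S_ICP`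
is invariant. -/
theorem SICP_subset_SASm {d : ℕ} (G : CGraph d)
    (h : ¬ G.adj Node.E Node.Y)
    (hne : {S : Set (Fin d) | G.MinInvariant S}.Nonempty)
    (m : ℕ)
    (hmin : sInf {k : ℕ | ∃ S : Set (Fin d), G.MinInvariant S ∧ S.ncard = k} ≤ m)
    (hmd : m ≤ d) :
    G.SICP ⊆ G.SASm m ∧ (G.SICP = G.SASm m ↔ G.Invariant G.SICP) := by
  have hKne : {k : ℕ | ∃ S : Set (Fin d), G.MinInvariant S ∧ S.ncard = k}.Nonempty := by
    obtain ⟨S, hS⟩ := hne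
    exact ⟨S.ncard, S, hS, rfl⟩
  obtain ⟨S0, hS0, hS0card⟩ := Nat.sInf_mem hKne
  have hS0m : S0.ncard ≤ m := hS0card.trans_le hmin
  have hS0inv : G.Invariant S0 := hS0.1
  have hS0mem : S0 ∈ {S : Set (Fin d) | G.MinInvariant S ∧ S.ncard ≤ m} := ⟨hS0, hS0m⟩
  have hsub : G.SICP ⊆ G.SASm m := by
    intro j hj
    exact Set.mem_sUnion.2 ⟨S0, hS0mem, hj.2 S0 hS0inv⟩
  refine ⟨hsub, ?_, ?_⟩
  · intro heq
    have h1 : S0 ⊆ G.SASm m := fun j hj => Set.mem_sUnion.2 ⟨S0, hS0mem, hj⟩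
    have h2 : G.SICP ⊆ S0 := fun j hj => hj.2 S0 hS0inv
    have hEq : G.SICP = S0 := Set.Subset.antisymm h2 (by rw [heq]; exact h1)
    rw [hEq]; exact hS0inv
  · intro hinv
    refine Set.Subset.antisymm hsub ?_
    intro j hj
    obtain ⟨S, ⟨hSmi, _⟩, hjS⟩ := Set.mem_sUnion.1 hj
    have hIcpS : G.SICP ⊆ S := fun k hk => hk.2 S hSmi.1
    by_cases hEq : G.SICP = S
    · rw [hEq]; exact hjS
    · exact absurd hinv (hSmi.2 _ (Set.ssubset_iff_subset_ne.2 ⟨hIcpS, hEq⟩))
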